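/- arXiv:math/0311305 — 5 statements merged into one kernel-verified Lean document; each statement's English description precedes it below -/
import Mathlib

section
/- Let H be a finitely generated free ℤ-module, Λ : H × H → ℤ a unimodular symmetric bilinear form, and sν : H → ℤ/2 a group homomorphism. Suppose Λ is of type II, i.e. Λ(x,x) ≡ 0 (mod 2) for all x ∈ H, and that Λ admits a symplectic-type basis λ₁,…,λ_k, μ₁,…,μ_k with Λ(λ_i,λ_j) = 0, Λ(μ_i,μ_j) = 0, Λ(λ_i,μ_j) = δ_{ij}. If the Arf invariant Φ := Σ_{i=1}^k sν(λ_i)·sν(μ_i) vanishes in ℤ/2, then there exists a Lagrangian L ⊆ H on which sν vanishes identically. -/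
/-!
Write `λ_j = b (.inl j)`, `μ_j = b (.inr j)`, let `P` be the span of the `λ_j` and `S` the sum of
the `μ_j` with `sν λ_j = 1`. On `P`, `sν` agrees with `Λ (·, S)` mod 2, and `sν S` is the Arf
invariant; hence `sν` vanishes on `(P ∩ S^⊥) + ℤ S`, which is totally isotropic because `P` and
`S` are. If some `sν λ_{i₀} = 1`, the vectors `S`, `λ_j - λ_{i₀}` (`sν λ_j = 1`, `j ≠ i₀`) and
`λ_j` (`sν λ_j = 0`) lie in it and, together with `λ_{i₀}` and the `μ_j` (`j ≠ i₀`), span `H`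
(otherwise take `P` itself). A spanning family of `2k` vectors in a free `ℤ`-module of rank `2k` is
a basis, so the first half spans a Lagrangian.
-/

/-- `L` is a Lagrangian for the bilinear form `Λ`: a direct summand on which `Λ`
vanishes identically and whose rank is half the rank of the ambient module. -/
def IsLagrangian {H : Type*} [AddCommGroup H] [Module ℤ H]
    (Λ : H →ₗ[ℤ] H →ₗ[ℤ] ℤ) (L : Submodule ℤ H) : Prop :=
  (∃ L' : Submodule ℤ H, IsCompl L L') ∧ (∀ x ∈ L, ∀ y ∈ L, Λ x y = 0) ∧
    2 * Module.finrank ℤ L = Module.finrank ℤ H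

open Module Submodule

section Isotropic

variable {R M : Type*} [CommRing R] [AddCommGroup M] [Module R M]

def IsTotallyIsotropic (B : M →ₗ[R] M →ₗ[R] R) (N : Submodule R M) : Prop :=
  ∀ x ∈ N, ∀ y ∈ N, B x y = 0

def infPerpSupSpan (B : M →ₗ[R] M →ₗ[R] R) (P : Submodule R M) (S : M) : Submodule R M :=
  P ⊓ LinearMap.ker (B.flip S) ⊔ R ∙ S

variable {B : M →ₗ[R] M →ₗ[R] R}

theorem IsTotallyIsotropic.mono {N N' : Submodule R M} (h : IsTotallyIsotropic B N')
    (hN : N ≤ N') : IsTotallyIsotropic B N :=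
  fun x hx y hy => h x (hN hx) y (hN hy)

theorem isTotallyIsotropic_span {s : Set M} (hs : ∀ x ∈ s, ∀ y ∈ s, B x y = 0) :
    IsTotallyIsotropic B (span R s) := by
  have h : ∀ x ∈ s, span R s ≤ LinearMap.ker (B x) := fun x hx =>
    span_le.mpr fun y hy => hs x hx y hy
  intro x hx y hy
  exact (span_le (p := LinearMap.ker (B.flip y))).mpr (fun x' hx' => h x' hx' hy) hx

theorem IsTotallyIsotropic.infPerpSupSpan (hB : ∀ x y, B x y = B y x)
    {P : Submodule R M} (hP : IsTotallyIsotropic B P) {S : M} (hS : B S S = 0) :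
    IsTotallyIsotropic B (infPerpSupSpan B P S) := by
  intro x hx y hy
  obtain ⟨p, ⟨hpP, hpS⟩, _, hs, rfl⟩ := mem_sup.mp hx
  obtain ⟨q, ⟨hqP, hqS⟩, _, ht, rfl⟩ := mem_sup.mp hy
  obtain ⟨s, rfl⟩ := mem_span_singleton.mp hs
  obtain ⟨t, rfl⟩ := mem_span_singleton.mp ht
  have hSq : B S q = 0 := (hB S q).trans hqS
  simp [hP p hpP q hqP, show B p S = 0 from hpS, hSq, hS]

end Isotropic

theorem isLagrangian_span_range_inl {H : Type*} [AddCommGroup H] {Λ : H →ₗ[ℤ] H →ₗ[ℤ] ℤ}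
    {ι : Type*} [Fintype ι] {u : ι ⊕ ι → H} (hspan : span ℤ (Set.range u) = ⊤)
    (hcard : finrank ℤ H = 2 * Fintype.card ι)
    (hiso : IsTotallyIsotropic Λ (span ℤ (Set.range (u ∘ Sum.inl)))) :
    IsLagrangian Λ (span ℤ (Set.range (u ∘ Sum.inl))) := by
  have hu : LinearIndependent ℤ u :=
    linearIndependent_of_top_le_span_of_card_eq_finrank hspan.ge (by simp [hcard]; ring)
  refine ⟨⟨span ℤ (Set.range (u ∘ Sum.inr)), ?_⟩, hiso, ?_⟩
  · simpa only [Set.range_comp] using hu.isCompl_span_image hspan Set.isCompl_range_inl_range_inr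
  · rw [finrank_span_eq_card (hu.comp Sum.inl Sum.inl_injective), hcard]

section Hyperbolic

variable {H : Type*} [AddCommGroup H] {Λ : H →ₗ[ℤ] H →ₗ[ℤ] ℤ} {ι : Type*} [DecidableEq ι]
  {b : ι ⊕ ι → H}

theorem apply_inl_sum_inr (hlm : ∀ i j, Λ (b (.inl i)) (b (.inr j)) = if i = j then 1 else 0)
    (B : Finset ι) (j : ι) : Λ (b (.inl j)) (∑ m ∈ B, b (.inr m)) = if j ∈ B then 1 else 0 := by
  simp [hlm]

theorem exists_span_eq_top_forall_inl_mem_infPerpSupSpan (hb : span ℤ (Set.range b) = ⊤)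
    (hlm : ∀ i j, Λ (b (.inl i)) (b (.inr j)) = if i = j then 1 else 0) (B : Finset ι) :
    ∃ u : ι ⊕ ι → H, span ℤ (Set.range u) = ⊤ ∧ ∀ j,
      u (.inl j) ∈ infPerpSupSpan Λ (span ℤ (Set.range (b ∘ .inl))) (∑ m ∈ B, b (.inr m)) := by
  have hP : ∀ j, b (.inl j) ∈ span ℤ (Set.range (b ∘ .inl)) := fun j => subset_span ⟨j, rfl⟩
  have hmem : ∀ x ∈ span ℤ (Set.range (b ∘ .inl)), Λ x (∑ m ∈ B, b (.inr m)) = 0 →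
      x ∈ infPerpSupSpan Λ (span ℤ (Set.range (b ∘ .inl))) (∑ m ∈ B, b (.inr m)) :=
    fun x hx hxS => mem_sup_left (mem_inf.mpr ⟨hx, hxS⟩)
  rcases B.eq_empty_or_nonempty with rfl | ⟨i₀, hi₀⟩
  · exact ⟨b, hb, fun j => hmem _ (hP j) (by simp)⟩
  let u : ι ⊕ ι → H := Sum.elim
    (fun j => if j = i₀ then ∑ m ∈ B, b (.inr m)
      else if j ∈ B then b (.inl j) - b (.inl i₀) else b (.inl j))
    (fun j => if j = i₀ then b (.inl i₀) else b (.inr j))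
  have hu : ∀ s, u s ∈ span ℤ (Set.range u) := fun s => subset_span ⟨s, rfl⟩
  refine ⟨u, eq_top_iff.mpr (hb ▸ span_le.mpr ?_), fun j => ?_⟩
  · rintro _ ⟨j | j, rfl⟩
    · by_cases hj₀ : j = i₀
      · subst hj₀
        simpa [u] using hu (.inr j)
      by_cases hj : j ∈ B
      · have : b (.inl j) = u (.inl j) + u (.inr i₀) := by simp [u, hj₀, hj]
        exact this ▸ add_mem (hu _) (hu _)
      · simpa [u, hj₀, hj] using hu (.inl j)
    · by_cases hj₀ : j = i₀
      · subst hj₀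
        have : b (.inr j) = u (.inl j) - ∑ m ∈ B.erase j, u (.inr m) := by
          have hB : ∀ m ∈ B.erase j, u (.inr m) = b (.inr m) := fun m hm => by
            simp [u, Finset.ne_of_mem_erase hm]
          rw [eq_sub_iff_add_eq, Finset.sum_congr rfl hB,
            Finset.add_sum_erase B (fun m => b (.inr m)) hi₀]
          simp [u]
        exact this ▸ sub_mem (hu _) (sum_mem fun m _ => hu _)
      · simpa [u, hj₀] using hu (.inr j)
  · by_cases hj₀ : j = i₀
    · rw [show u (.inl j) = ∑ m ∈ B, b (.inr m) by simp [u, hj₀]]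
      exact mem_sup_right (mem_span_singleton_self _)
    by_cases hj : j ∈ B
    · simpa [u, hj₀, hj] using hmem _ (sub_mem (hP j) (hP i₀))
        (by rw [map_sub, LinearMap.sub_apply, apply_inl_sum_inr hlm, apply_inl_sum_inr hlm,
          if_pos hj, if_pos hi₀, sub_self])
    · simpa [u, hj₀, hj] using hmem _ (hP j) (by rw [apply_inl_sum_inr hlm, if_neg hj])

end Hyperbolic

section Arf

variable {H : Type*} [AddCommGroup H] {Λ : H →ₗ[ℤ] H →ₗ[ℤ] ℤ} {ι : Type*} [Fintype ι]
  {b : ι ⊕ ι → H} (sν : H →+ ZMod 2)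

def sumInrOfInlEqOne (b : ι ⊕ ι → H) : H :=
  ∑ m ∈ Finset.univ.filter (fun j => sν (b (.inl j)) = 1), b (.inr m)

theorem map_eq_intCast_apply_sumInrOfInlEqOne [DecidableEq ι]
    (hlm : ∀ i j, Λ (b (.inl i)) (b (.inr j)) = if i = j then 1 else 0) {x : H}
    (hx : x ∈ span ℤ (Set.range (b ∘ .inl))) : sν x = Λ x (sumInrOfInlEqOne sν b) := by
  have hgen : Set.EqOn sν.toIntLinearMap ((Int.castAddHom (ZMod 2)).toIntLinearMap ∘ₗ
      Λ.flip (sumInrOfInlEqOne sν b)) (Set.range (b ∘ .inl)) := by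
    rintro _ ⟨j, rfl⟩
    have : ∀ a : ZMod 2, a = if a = 1 then 1 else 0 := by decide
    simp only [Function.comp_apply, AddMonoidHom.coe_toIntLinearMap, LinearMap.comp_apply,
      LinearMap.flip_apply, sumInrOfInlEqOne, apply_inl_sum_inr hlm, Finset.mem_filter,
      Finset.mem_univ, true_and]
    simpa [apply_ite (Int.castAddHom (ZMod 2))] using this _
  simpa using LinearMap.eqOn_span' hgen hx

theorem map_sumInrOfInlEqOne :
    sν (sumInrOfInlEqOne sν b) = ∑ i, sν (b (.inl i)) * sν (b (.inr i)) := by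
  have : ∀ a e : ZMod 2, (if a = 1 then e else 0) = a * e := by decide
  rw [sumInrOfInlEqOne, map_sum, Finset.sum_filter]
  simp only [this]

theorem map_eq_zero_of_mem_infPerpSupSpan [DecidableEq ι]
    (hlm : ∀ i j, Λ (b (.inl i)) (b (.inr j)) = if i = j then 1 else 0)
    (hArf : ∑ i, sν (b (.inl i)) * sν (b (.inr i)) = 0) {x : H}
    (hx : x ∈ infPerpSupSpan Λ (span ℤ (Set.range (b ∘ .inl))) (sumInrOfInlEqOne sν b)) :
    sν x = 0 := by
  obtain ⟨p, ⟨hpP, hpS⟩, _, hs, rfl⟩ := mem_sup.mp hx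
  obtain ⟨t, rfl⟩ := mem_span_singleton.mp hs
  rw [map_add, map_zsmul, map_sumInrOfInlEqOne, hArf,
    map_eq_intCast_apply_sumInrOfInlEqOne sν hlm hpP, show Λ p (sumInrOfInlEqOne sν b) = 0 from hpS]
  simp

end Arf

theorem stmt1_general {H : Type*} [AddCommGroup H] [Module ℤ H]
    (k : ℕ) (b : Module.Basis (Fin k ⊕ Fin k) ℤ H)
    (Λ : H →ₗ[ℤ] H →ₗ[ℤ] ℤ)
    (hsymm : ∀ x y, Λ x y = Λ y x)
    (hll : ∀ i j, Λ (b (Sum.inl i)) (b (Sum.inl j)) = 0)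
    (hmm : ∀ i j, Λ (b (Sum.inr i)) (b (Sum.inr j)) = 0)
    (hlm : ∀ i j, Λ (b (Sum.inl i)) (b (Sum.inr j)) = if i = j then 1 else 0)
    (sν : H →+ ZMod 2)
    (hArf : ∑ i : Fin k, sν (b (Sum.inl i)) * sν (b (Sum.inr i)) = 0) :
    ∃ L : Submodule ℤ H, IsLagrangian Λ L ∧ ∀ x ∈ L, sν x = 0 := by
  -- All `ℤ`-module structures agree; the canonical one makes `sν` a `ℤ`-linear map.
  obtain rfl : ‹Module ℤ H› = AddCommGroup.toIntModule H := Subsingleton.elim _ _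
  have hSS : Λ (sumInrOfInlEqOne sν b) (sumInrOfInlEqOne sν b) = 0 := by
    have hS : sumInrOfInlEqOne sν b ∈ span ℤ (Set.range (b ∘ .inr)) :=
      sum_mem fun m _ => subset_span ⟨m, rfl⟩
    exact isTotallyIsotropic_span (by rintro _ ⟨i, rfl⟩ _ ⟨j, rfl⟩; exact hmm i j) _ hS _ hS
  have hiso : IsTotallyIsotropic Λ
      (infPerpSupSpan Λ (span ℤ (Set.range (b ∘ .inl))) (sumInrOfInlEqOne sν b)) :=
    (isTotallyIsotropic_span (by rintro _ ⟨i, rfl⟩ _ ⟨j, rfl⟩; exact hll i j)).infPerpSupSpan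
      hsymm hSS
  obtain ⟨u, hu, huM⟩ := exists_span_eq_top_forall_inl_mem_infPerpSupSpan b.span_eq hlm
    (Finset.univ.filter fun j => sν (b (.inl j)) = 1)
  have hLM := span_le.mpr (Set.range_subset_iff.mpr huM)
  refine ⟨_, isLagrangian_span_range_inl hu ?_ (hiso.mono hLM),
    fun x hx => map_eq_zero_of_mem_infPerpSupSpan sν hlm hArf (hLM hx)⟩
  simp [finrank_eq_card_basis b]
  ring

theorem stmt1 {H : Type*} [AddCommGroup H] [Module ℤ H]
    [Module.Free ℤ H] [Module.Finite ℤ H]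
    (k : ℕ) (b : Module.Basis (Fin k ⊕ Fin k) ℤ H)
    (Λ : H →ₗ[ℤ] H →ₗ[ℤ] ℤ)
    (hsymm : ∀ x y, Λ x y = Λ y x)
    (hunimod : Function.Bijective fun x : H => Λ x)
    (heven : ∀ x, Even (Λ x x))
    (hll : ∀ i j, Λ (b (Sum.inl i)) (b (Sum.inl j)) = 0)
    (hmm : ∀ i j, Λ (b (Sum.inr i)) (b (Sum.inr j)) = 0)
    (hlm : ∀ i j, Λ (b (Sum.inl i)) (b (Sum.inr j)) = if i = j then 1 else 0)
    (sν : H →+ ZMod 2)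
    (hArf : ∑ i : Fin k, sν (b (Sum.inl i)) * sν (b (Sum.inr i)) = 0) :
    ∃ L : Submodule ℤ H, IsLagrangian Λ L ∧ ∀ x ∈ L, sν x = 0 :=
  stmt1_general k b Λ hsymm hll hmm hlm sν hArf
end

section
/- Let H be a free ℤ-module of rank 2k with a unimodular symmetric type II bilinear form Λ admitting a hyperbolic basis λ₁,…,λ_k,μ₁,…,μ_k (Λ(λ_i,λ_j)=0, Λ(μ_i,μ_j)=0, Λ(λ_i,μ_j)=δ_{ij}), and sν : H → ℤ/2 a homomorphism. If H admits a Lagrangian L with sν|_L ≡ 0, then the Arf invariant Σ_{i=1}^k sν(λ_i)·sν(μ_i) vanishes in ℤ/2. -/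
/-!
Since `H` is free, `sν` lifts to an integral functional, which unimodularity writes as
`Λ c`. In the hyperbolic basis `Λ(c, c) = 2 ∑ Λ(c, λᵢ) Λ(c, μᵢ)`, so the Arf sum is
`Λ(c, c) / 2 mod 2` and it suffices that `4 ∣ Λ(c, c)`. As `sν` vanishes on `L`, `Λ(c, ·)`
is even on `L`, hence equals `Λ(2d, ·)` there for some `d`. A Lagrangian direct summand is
its own orthogonal, so `c = ℓ + 2d` with `ℓ ∈ L`, and `Λ(c, c) = 4 (Λ(ℓ, d) + Λ(d, d))`.
-/

open Module

theorem AddMonoidHom.exists_intCast_eq {H : Type*} [AddCommGroup H] [Module ℤ H]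
    [Projective ℤ H] {n : ℕ} (f : H →+ ZMod n) : ∃ φ : H →ₗ[ℤ] ℤ, ∀ x, f x = φ x := by
  -- not `f.toIntLinearMap`, which is linear for the canonical `ℤ`-module on `H`
  let fℤ : H →ₗ[ℤ] ZMod n :=
    { f with map_smul' := fun r x => by simpa using map_intCast_smul f ℤ (ZMod n) r x }
  obtain ⟨φ, hφ⟩ := projective_lifting_property (Int.castAddHom (ZMod n)).toIntLinearMap fℤ
    ZMod.intCast_surjective
  exact ⟨φ, fun x => (LinearMap.congr_fun hφ x).symm⟩

theorem Int.exists_linearMap_eq_smul_of_forall_dvd {M : Type*} [AddCommGroup M] [Module ℤ M]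
    (f : M →ₗ[ℤ] ℤ) (n : ℤ) (h : ∀ x, n ∣ f x) : ∃ g : M →ₗ[ℤ] ℤ, f = n • g := by
  refine ⟨{ toFun := fun x => f x / n, map_add' := ?_, map_smul' := ?_ }, ?_⟩
  · intro x y
    simp [Int.add_ediv_of_dvd_left (h x)]
  · intro r x
    simp [Int.mul_ediv_assoc r (h x)]
  · ext x
    simp [Int.mul_ediv_cancel' (h x)]

namespace LinearMap.BilinForm

variable {R M : Type*} [CommRing R] [AddCommGroup M] [Module R M] {B : LinearMap.BilinForm R M}

theorem exists_apply_eq_of_isCompl (hB : Function.Surjective B) {L L' : Submodule R M}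
    (hc : IsCompl L L') (g : Dual R L) : ∃ d, ∀ ℓ : L, B d ℓ = g ℓ := by
  obtain ⟨d, hd⟩ := hB (g ∘ₗ L.projectionOnto L' hc)
  exact ⟨d, fun ℓ => by simp [hd]⟩

theorem orthogonal_eq_self_of_isCompl [IsDomain R] [IsPrincipalIdealRing R] [Module.Free R M]
    [Module.Finite R M] (hB : B.IsSymm) (hsurj : Function.Surjective B) {L L' : Submodule R M}
    (hc : IsCompl L L') (hiso : ∀ x ∈ L, ∀ y ∈ L, B x y = 0)
    (hrank : 2 * finrank R L = finrank R M) :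
    B.orthogonal L = L := by
  set K := B.orthogonal L
  have hLK : L ≤ K := fun y hy => mem_orthogonal_iff.2 fun x hx => hiso x hx y hy
  let f : M →ₗ[R] Dual R L := L.subtype.dualMap ∘ₗ B
  have hker : LinearMap.ker f = K := by
    ext x; simp [f, K, LinearMap.ext_iff, hB.eq x]
  have hf : Function.Surjective f := fun g =>
    (exists_apply_eq_of_isCompl hsurj hc g).imp fun d hd => LinearMap.ext hd
  have hK : finrank R K = finrank R L := by
    have := (LinearMap.ker f).finrank_quotient_add_finrank
    rw [(f.quotKerEquivOfSurjective hf).finrank_eq,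
      ← (Free.chooseBasis R L).toDualEquiv.finrank_eq, hker] at this
    omega
  have hsup : L ⊔ L' ⊓ K = K := by
    rw [← sup_inf_assoc_of_le L' hLK, hc.sup_eq_top, top_inf_eq]
  have hinf : L ⊓ (L' ⊓ K) = ⊥ := eq_bot_mono (inf_le_inf_left L inf_le_left) hc.inf_eq_bot
  have hdim := Submodule.rank_sup_add_rank_inf_eq L (L' ⊓ K)
  rw [hsup, hinf, rank_bot, add_zero, ← finrank_eq_rank, ← finrank_eq_rank, ← finrank_eq_rank,
    hK] at hdim
  have h0 : L' ⊓ K = ⊥ := by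
    rw [← Submodule.finrank_eq_zero]
    norm_cast at hdim
    omega
  rw [← hsup, h0, sup_bot_eq]

section Hyperbolic

variable {ι : Type*} [DecidableEq ι] {b : Basis (ι ⊕ ι) R M}

theorem apply_basis_inr_eq_repr_inl (hmm : ∀ i j, B (b (Sum.inr i)) (b (Sum.inr j)) = 0)
    (hlm : ∀ i j, B (b (Sum.inl i)) (b (Sum.inr j)) = if i = j then 1 else 0) (x : M) (i : ι) :
    B x (b (Sum.inr i)) = b.repr x (Sum.inl i) := by
  change B.flip (b (Sum.inr i)) x = b.coord (Sum.inl i) x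
  congr 1
  refine b.ext fun j => ?_
  rcases j with j | j <;> simp [hmm, hlm, Finsupp.single_apply, eq_comm]

theorem apply_basis_inl_eq_repr_inr (hB : B.IsSymm)
    (hll : ∀ i j, B (b (Sum.inl i)) (b (Sum.inl j)) = 0)
    (hlm : ∀ i j, B (b (Sum.inl i)) (b (Sum.inr j)) = if i = j then 1 else 0) (x : M) (i : ι) :
    B x (b (Sum.inl i)) = b.repr x (Sum.inr i) := by
  change B.flip (b (Sum.inl i)) x = b.coord (Sum.inr i) x
  congr 1
  refine b.ext fun j => ?_
  rcases j with j | j <;> simp [hll, hB.eq (b (Sum.inr j)), hlm, Finsupp.single_apply, eq_comm]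

theorem apply_self_eq_two_mul_sum [Fintype ι] (hB : B.IsSymm)
    (hll : ∀ i j, B (b (Sum.inl i)) (b (Sum.inl j)) = 0)
    (hmm : ∀ i j, B (b (Sum.inr i)) (b (Sum.inr j)) = 0)
    (hlm : ∀ i j, B (b (Sum.inl i)) (b (Sum.inr j)) = if i = j then 1 else 0) (x : M) :
    B x x = 2 * ∑ i, B x (b (Sum.inl i)) * B x (b (Sum.inr i)) := by
  nth_rewrite 2 [← b.sum_repr x]
  rw [map_sum, Fintype.sum_sum_type]
  simp only [map_smul, smul_eq_mul,
    apply_basis_inl_eq_repr_inr hB hll hlm, apply_basis_inr_eq_repr_inl hmm hlm]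
  rw [Finset.mul_sum, ← Finset.sum_add_distrib]
  exact Finset.sum_congr rfl fun i _ => by ring

end Hyperbolic

end LinearMap.BilinForm

theorem IsLagrangian.four_dvd_apply_self {H : Type*} [AddCommGroup H] [Module ℤ H]
    [Module.Free ℤ H] [Module.Finite ℤ H] {Λ : LinearMap.BilinForm ℤ H} {L : Submodule ℤ H}
    (hL : IsLagrangian Λ L) (hsymm : Λ.IsSymm) (hsurj : Function.Surjective Λ) {c : H}
    (hcL : ∀ ℓ ∈ L, 2 ∣ Λ c ℓ) : 4 ∣ Λ c c := by
  obtain ⟨⟨L', hc⟩, hiso, hrank⟩ := hL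
  let π := L.projectionOnto L' hc
  obtain ⟨g, hg⟩ := Int.exists_linearMap_eq_smul_of_forall_dvd (Λ c ∘ₗ L.subtype ∘ₗ π) 2
    fun x => hcL _ (π x).2
  obtain ⟨d, rfl⟩ := hsurj g
  have hmem : c - 2 • d ∈ L := by
    -- `IsLagrangian` takes `finrank ℤ L` for the canonical `ℤ`-module on `↥L`, not `L.module`.
    rw [← Λ.orthogonal_eq_self_of_isCompl hsymm hsurj hc hiso
      (by convert hrank <;> first | rfl | exact Subsingleton.elim _ _)]
    refine LinearMap.BilinForm.mem_orthogonal_iff.2 fun ℓ hℓ => ?_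
    have hgℓ := LinearMap.congr_fun hg ℓ
    simp only [LinearMap.coe_comp, Function.comp_apply, Submodule.subtype_apply,
      LinearMap.smul_apply, smul_eq_mul, π, Submodule.projectionOnto_apply_left hc ⟨ℓ, hℓ⟩]
      at hgℓ
    simp [hsymm.eq ℓ, hgℓ]
  obtain ⟨ℓ, hℓ, hcℓ⟩ : ∃ ℓ ∈ L, c = ℓ + 2 • d := ⟨_, hmem, by abel⟩
  rw [hcℓ]
  exact ⟨Λ ℓ d + Λ d d, by simp [hiso ℓ hℓ ℓ hℓ, hsymm.eq d ℓ]; ring⟩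

theorem stmt2_general {H : Type*} [AddCommGroup H] [Module ℤ H]
    [Module.Free ℤ H] [Module.Finite ℤ H]
    (k : ℕ) (b : Module.Basis (Fin k ⊕ Fin k) ℤ H)
    (Λ : H →ₗ[ℤ] H →ₗ[ℤ] ℤ)
    (hsymm : ∀ x y, Λ x y = Λ y x)
    (hunimod : Function.Bijective fun x : H => Λ x)
    (hll : ∀ i j, Λ (b (Sum.inl i)) (b (Sum.inl j)) = 0)
    (hmm : ∀ i j, Λ (b (Sum.inr i)) (b (Sum.inr j)) = 0)
    (hlm : ∀ i j, Λ (b (Sum.inl i)) (b (Sum.inr j)) = if i = j then 1 else 0)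
    (sν : H →+ ZMod 2)
    (L : Submodule ℤ H) (hL : IsLagrangian Λ L) (hLν : ∀ x ∈ L, sν x = 0) :
    ∑ i : Fin k, sν (b (Sum.inl i)) * sν (b (Sum.inr i)) = 0 := by
  obtain ⟨φ, hφ⟩ := sν.exists_intCast_eq
  obtain ⟨c, rfl⟩ := hunimod.2 φ
  have hcL : ∀ ℓ ∈ L, 2 ∣ Λ c ℓ := fun ℓ hℓ =>
    (ZMod.intCast_zmod_eq_zero_iff_dvd _ 2).1 ((hφ ℓ).symm.trans (hLν ℓ hℓ))
  have h4 := hL.four_dvd_apply_self ⟨hsymm⟩ hunimod.2 hcL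
  rw [LinearMap.BilinForm.apply_self_eq_two_mul_sum ⟨hsymm⟩ hll hmm hlm] at h4
  simp only [hφ, ← Int.cast_mul, ← Int.cast_sum]
  exact (ZMod.intCast_zmod_eq_zero_iff_dvd _ 2).2 (by omega)

theorem stmt2 {H : Type*} [AddCommGroup H] [Module ℤ H]
    [Module.Free ℤ H] [Module.Finite ℤ H]
    (k : ℕ) (b : Module.Basis (Fin k ⊕ Fin k) ℤ H)
    (Λ : H →ₗ[ℤ] H →ₗ[ℤ] ℤ)
    (hsymm : ∀ x y, Λ x y = Λ y x)
    (hunimod : Function.Bijective fun x : H => Λ x)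
    (heven : ∀ x, Even (Λ x x))
    (hll : ∀ i j, Λ (b (Sum.inl i)) (b (Sum.inl j)) = 0)
    (hmm : ∀ i j, Λ (b (Sum.inr i)) (b (Sum.inr j)) = 0)
    (hlm : ∀ i j, Λ (b (Sum.inl i)) (b (Sum.inr j)) = if i = j then 1 else 0)
    (sν : H →+ ZMod 2)
    (L : Submodule ℤ H) (hL : IsLagrangian Λ L) (hLν : ∀ x ∈ L, sν x = 0) :
    ∑ i : Fin k, sν (b (Sum.inl i)) * sν (b (Sum.inr i)) = 0 :=
  stmt2_general k b Λ hsymm hunimod hll hmm hlm sν L hL hLν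
end

section
/- The Arf invariant of a quadratic refinement is well-defined: if H is a free ℤ/2-vector space of dimension 2k with a nondegenerate symplectic form Λ and q : H → ℤ/2 satisfies q(x+y) = q(x) + q(y) + Λ(x,y), then for any two symplectic bases (λ_i, μ_i) and (λ'_i, μ'_i) of H one has Σ_{i=1}^k q(λ_i)q(μ_i) = Σ_{i=1}^k q(λ'_i)q(μ'_i). -/
/-!
The Gauss sum `∑ₓ (-1)^q(x)` depends only on `q`. A symplectic basis splits `H` into the
orthogonal hyperbolic planes `⟨λᵢ, μᵢ⟩`, and `q` is additive on orthogonal vectors, so the Gauss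
sum factors into the four-term sums over the planes, each equal to `2 · (-1)^(q(λᵢ) q(μᵢ))`.
Hence the Gauss sum is `2^k · (-1)^(∑ᵢ q(λᵢ) q(μᵢ))`, which determines `∑ᵢ q(λᵢ) q(μᵢ)`.
-/

open Finset

def signChar : AddChar (ZMod 2) ℤ where
  toFun a := if a = 0 then 1 else -1
  map_zero_eq_one' := rfl
  map_add_eq_mul' := by decide

lemma signChar_injective : Function.Injective signChar := by decide

lemma AddChar.map_sum_eq_prod {A M ι : Type*} [AddCommMonoid A] [CommMonoid M]
    (ψ : AddChar A M) (s : Finset ι) (f : ι → A) :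
    ψ (∑ i ∈ s, f i) = ∏ i ∈ s, ψ (f i) := by
  classical
  induction s using Finset.induction with
  | empty => simp
  | insert a s ha ih => rw [sum_insert ha, prod_insert ha, ψ.map_add_eq_mul, ih]

section QuadraticRefinement

variable {H : Type*} [AddCommGroup H] [Module (ZMod 2) H]
  {Λ : H →ₗ[ZMod 2] H →ₗ[ZMod 2] ZMod 2} {q : H → ZMod 2}

lemma map_zero_of_quadratic_refinement (hq : ∀ x y, q (x + y) = q x + q y + Λ x y) :
    q 0 = 0 := by
  have h := hq 0 0
  rwa [add_zero, map_zero, add_zero, CharTwo.add_self_eq_zero] at h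

lemma map_sum_of_pairwise_orthogonal (hq : ∀ x y, q (x + y) = q x + q y + Λ x y)
    {ι : Type*} (v : ι → H) (horth : Pairwise fun i j => Λ (v i) (v j) = 0) (s : Finset ι) :
    q (∑ i ∈ s, v i) = ∑ i ∈ s, q (v i) := by
  classical
  induction s using Finset.induction with
  | empty => simpa using map_zero_of_quadratic_refinement hq
  | insert a s ha ih =>
    have horth_a : Λ (v a) (∑ i ∈ s, v i) = 0 := by
      rw [map_sum]
      exact sum_eq_zero fun j hj => horth (ne_of_mem_of_not_mem hj ha).symm
    rw [sum_insert ha, hq, ih, horth_a, add_zero, sum_insert ha]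

lemma sum_signChar_hyperbolic_plane (hq : ∀ x y, q (x + y) = q x + q y + Λ x y)
    {x y : H} (hxy : Λ x y = 1) :
    ∑ t : ZMod 2 × ZMod 2, signChar (q (t.1 • x + t.2 • y)) = 2 * signChar (q x * q y) := by
  have hq0 := map_zero_of_quadratic_refinement hq
  have hzmod : ∀ f : ZMod 2 → ℤ, ∑ a, f a = f 0 + f 1 := fun f => Fin.sum_univ_two f
  rw [Fintype.sum_prod_type]
  simp only [hzmod, zero_smul, one_smul, add_zero, zero_add, hq x y, hxy, hq0]
  generalize q x = a
  generalize q y = c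
  revert a c
  decide

variable (halt : ∀ x, Λ x x = 0) (hq : ∀ x y, q (x + y) = q x + q y + Λ x y)
  {k : ℕ} (b : Module.Basis (Fin k ⊕ Fin k) (ZMod 2) H)
  (hll : ∀ i j, Λ (b (Sum.inl i)) (b (Sum.inl j)) = 0)
  (hmm : ∀ i j, Λ (b (Sum.inr i)) (b (Sum.inr j)) = 0)
  (hlm : ∀ i j, Λ (b (Sum.inl i)) (b (Sum.inr j)) = if i = j then 1 else 0)
include halt hll hmm hlm

lemma symplectic_planes_orthogonal {i j : Fin k} (hij : i ≠ j) (s t s' t' : ZMod 2) :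
    Λ (s • b (Sum.inl i) + t • b (Sum.inr i)) (s' • b (Sum.inl j) + t' • b (Sum.inr j)) = 0 := by
  have hml : Λ (b (Sum.inr i)) (b (Sum.inl j)) = 0 :=
    (LinearMap.IsAlt.eq_iff halt).mp (by rw [hlm, if_neg hij.symm])
  simp only [map_add, map_smul, LinearMap.add_apply, LinearMap.smul_apply, hll, hmm, hml,
    hlm, if_neg hij, smul_zero, add_zero]

include hq

lemma sum_signChar_eq_two_pow_mul [Fintype H] :
    ∑ x : H, signChar (q x) =
      2 ^ k * signChar (∑ i : Fin k, q (b (Sum.inl i)) * q (b (Sum.inr i))) := by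
  let plane (i : Fin k) (t : ZMod 2 × ZMod 2) : H := t.1 • b (Sum.inl i) + t.2 • b (Sum.inr i)
  let e : (Fin k → ZMod 2 × ZMod 2) ≃ H :=
    ((Equiv.arrowProdEquivProdArrow _ _ _).trans (Equiv.sumArrowEquivProdArrow _ _ _).symm).trans
      b.equivFun.toEquiv.symm
  have he : ∀ g, e g = ∑ i, plane i (g i) := fun g => by
    change b.equivFun.symm _ = _
    rw [Module.Basis.equivFun_symm_apply, Fintype.sum_sum_type, ← sum_add_distrib]
    rfl
  have hplane : ∀ i, ∑ t, signChar (q (plane i t)) =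
      2 * signChar (q (b (Sum.inl i)) * q (b (Sum.inr i))) := fun i =>
    sum_signChar_hyperbolic_plane hq (by simpa using hlm i i)
  calc ∑ x : H, signChar (q x)
      = ∑ g : Fin k → ZMod 2 × ZMod 2, signChar (q (∑ i, plane i (g i))) := by
        rw [← e.sum_comp]
        simp only [he]
    _ = ∑ g : Fin k → ZMod 2 × ZMod 2, ∏ i, signChar (q (plane i (g i))) := by
        refine sum_congr rfl fun g _ => ?_
        rw [map_sum_of_pairwise_orthogonal hq _ fun _ _ hij =>
          symplectic_planes_orthogonal halt b hll hmm hlm hij _ _ _ _, signChar.map_sum_eq_prod]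
    _ = ∏ i, ∑ t, signChar (q (plane i t)) := by rw [Fintype.prod_sum]
    _ = 2 ^ k * signChar (∑ i : Fin k, q (b (Sum.inl i)) * q (b (Sum.inr i))) := by
        rw [prod_congr rfl fun i _ => hplane i, prod_mul_distrib, prod_const, card_univ,
          Fintype.card_fin, signChar.map_sum_eq_prod]

end QuadraticRefinement

theorem stmt6_general {H : Type*} [AddCommGroup H] [Module (ZMod 2) H]
    (k : ℕ)
    (Λ : H →ₗ[ZMod 2] H →ₗ[ZMod 2] ZMod 2)
    (halt : ∀ x, Λ x x = 0)
    (q : H → ZMod 2)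
    (hquad : ∀ x y, q (x + y) = q x + q y + Λ x y)
    (b b' : Module.Basis (Fin k ⊕ Fin k) (ZMod 2) H)
    (hll : ∀ i j, Λ (b (Sum.inl i)) (b (Sum.inl j)) = 0)
    (hmm : ∀ i j, Λ (b (Sum.inr i)) (b (Sum.inr j)) = 0)
    (hlm : ∀ i j, Λ (b (Sum.inl i)) (b (Sum.inr j)) = if i = j then 1 else 0)
    (hll' : ∀ i j, Λ (b' (Sum.inl i)) (b' (Sum.inl j)) = 0)
    (hmm' : ∀ i j, Λ (b' (Sum.inr i)) (b' (Sum.inr j)) = 0)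
    (hlm' : ∀ i j, Λ (b' (Sum.inl i)) (b' (Sum.inr j)) = if i = j then 1 else 0) :
    ∑ i : Fin k, q (b (Sum.inl i)) * q (b (Sum.inr i)) =
      ∑ i : Fin k, q (b' (Sum.inl i)) * q (b' (Sum.inr i)) := by
  let _ : Fintype H := Fintype.ofEquiv _ b.equivFun.toEquiv.symm
  have hgauss := (sum_signChar_eq_two_pow_mul halt hquad b hll hmm hlm).symm.trans
    (sum_signChar_eq_two_pow_mul halt hquad b' hll' hmm' hlm')
  exact signChar_injective (mul_left_cancel₀ (pow_ne_zero k two_ne_zero) hgauss)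

theorem stmt6 {H : Type*} [AddCommGroup H] [Module (ZMod 2) H]
    (k : ℕ)
    (Λ : H →ₗ[ZMod 2] H →ₗ[ZMod 2] ZMod 2)
    (halt : ∀ x, Λ x x = 0)
    (hnondeg : Function.Bijective fun x : H => Λ x)
    (q : H → ZMod 2)
    (hquad : ∀ x y, q (x + y) = q x + q y + Λ x y)
    (b b' : Module.Basis (Fin k ⊕ Fin k) (ZMod 2) H)
    (hll : ∀ i j, Λ (b (Sum.inl i)) (b (Sum.inl j)) = 0)
    (hmm : ∀ i j, Λ (b (Sum.inr i)) (b (Sum.inr j)) = 0)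
    (hlm : ∀ i j, Λ (b (Sum.inl i)) (b (Sum.inr j)) = if i = j then 1 else 0)
    (hll' : ∀ i j, Λ (b' (Sum.inl i)) (b' (Sum.inl j)) = 0)
    (hmm' : ∀ i j, Λ (b' (Sum.inr i)) (b' (Sum.inr j)) = 0)
    (hlm' : ∀ i j, Λ (b' (Sum.inl i)) (b' (Sum.inr j)) = if i = j then 1 else 0) :
    ∑ i : Fin k, q (b (Sum.inl i)) * q (b (Sum.inr i)) =
      ∑ i : Fin k, q (b' (Sum.inl i)) * q (b' (Sum.inr i)) :=
  stmt6_general k Λ halt q hquad b b' hll hmm hlm hll' hmm' hlm'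
end

section
/- Let Λ be a unimodular symmetric bilinear form on a finitely generated free ℤ-module H, and let L be a direct summand of H of rank equal to half the rank of H with Λ(x,y) = 0 for all x, y ∈ L. Then L equals its own orthogonal complement: L = {v ∈ H : Λ(v, x) = 0 for all x ∈ L}. -/
open Module

namespace Submodule

variable {R M : Type*} [CommRing R] [AddCommGroup M] [Module R M]

theorem dualMap_subtype_surjective_of_isCompl {p q : Submodule R M} (h : IsCompl p q) :
    Function.Surjective p.subtype.dualMap := fun g =>
  ⟨g ∘ₗ p.projectionOnto q h, by ext x; simp [projectionOnto_apply_left]⟩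

theorem eq_of_le_of_finrank_le_of_isTorsionFree [IsDomain R] {N P : Submodule R M}
    [Module.Finite R P] [IsTorsionFree R (M ⧸ N)] (h_le : N ≤ P)
    (h_finrank : finrank R P ≤ finrank R N) : N = P := by
  set f := N.mkQ ∘ₗ P.subtype
  have hker : finrank R (LinearMap.ker f) = finrank R N := by
    have : LinearMap.ker f = N.comap P.subtype := by ext; simp [f]
    rw [this]
    exact (comapSubtypeEquivOfLe h_le).finrank_eq
  have hrange : finrank R (LinearMap.range f) = 0 := by
    have := (LinearMap.ker f).finrank_quotient_add_finrank
    rw [f.quotKerEquivRange.finrank_eq] at this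
    omega
  rw [finrank_zero_iff, subsingleton_iff_eq_bot, LinearMap.range_eq_bot] at hrange
  refine le_antisymm h_le fun v hv => ?_
  simpa [f] using LinearMap.congr_fun hrange ⟨v, hv⟩

variable [IsDomain R] [IsPrincipalIdealRing R] [Module.Free R M] [Module.Finite R M]
  {B : M →ₗ[R] M →ₗ[R] R} {N N' : Submodule R M}

theorem finrank_orthogonalBilin_flip_add_finrank (hB : Function.Surjective B)
    (hN : IsCompl N N') : finrank R (N.orthogonalBilin B.flip) + finrank R N = finrank R M := by
  set φ := N.subtype.dualMap ∘ₗ B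
  have hφ : Function.Surjective φ := (dualMap_subtype_surjective_of_isCompl hN).comp hB
  have hker : N.orthogonalBilin B.flip = LinearMap.ker φ := by
    ext v; simp [φ, LinearMap.ext_iff]
  rw [hker, (Free.chooseBasis R N).toDualEquiv.finrank_eq,
    ← (φ.quotKerEquivOfSurjective hφ).finrank_eq, add_comm]
  exact (LinearMap.ker φ).finrank_quotient_add_finrank

theorem orthogonalBilin_flip_eq_self (hB : Function.Surjective B) (hN : IsCompl N N')
    (hiso : ∀ x ∈ N, ∀ y ∈ N, B x y = 0) (hrank : 2 * finrank R N = finrank R M) :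
    N.orthogonalBilin B.flip = N := by
  have hle : N ≤ N.orthogonalBilin B.flip := fun y hy x hx => hiso y hy x hx
  have : IsTorsionFree R (M ⧸ N) :=
    (quotientEquivOfIsCompl N N' hN).injective.moduleIsTorsionFree _ (map_smul _)
  have := finrank_orthogonalBilin_flip_add_finrank hB hN
  exact (eq_of_le_of_finrank_le_of_isTorsionFree hle (by omega)).symm

end Submodule

theorem IsLagrangian.orthogonalBilin_flip_eq_self {H : Type*} [AddCommGroup H] [Module ℤ H]
    [Module.Free ℤ H] [Module.Finite ℤ H] {Λ : H →ₗ[ℤ] H →ₗ[ℤ] ℤ}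
    (hΛ : Function.Surjective Λ) {L : Submodule ℤ H} (hL : IsLagrangian Λ L) :
    L.orthogonalBilin Λ.flip = L := by
  obtain ⟨⟨L', hL'⟩, hiso, hrank⟩ := hL
  -- `finrank ℤ L` in `IsLagrangian` is taken for the `ℤ`-module structure `AddCommGroup.toIntModule`
  exact Submodule.orthogonalBilin_flip_eq_self hΛ hL' hiso
    (by rwa [Subsingleton.elim L.module (AddCommGroup.toIntModule L)])

theorem stmt9_general {H : Type*} [AddCommGroup H] [Module ℤ H]
    [Module.Free ℤ H] [Module.Finite ℤ H]
    (Λ : H →ₗ[ℤ] H →ₗ[ℤ] ℤ)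
    (hunimod : Function.Bijective fun x : H => Λ x)
    (L : Submodule ℤ H)
    (hsummand : ∃ L' : Submodule ℤ H, IsCompl L L')
    (hiso : ∀ x ∈ L, ∀ y ∈ L, Λ x y = 0)
    (hrank : 2 * Module.finrank ℤ L = Module.finrank ℤ H) :
    ∀ v : H, v ∈ L ↔ ∀ x ∈ L, Λ v x = 0 := by
  have hperp :=
    IsLagrangian.orthogonalBilin_flip_eq_self hunimod.surjective ⟨hsummand, hiso, hrank⟩
  exact fun v => (SetLike.ext_iff.mp hperp v).symm

theorem stmt9 {H : Type*} [AddCommGroup H] [Module ℤ H]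
    [Module.Free ℤ H] [Module.Finite ℤ H]
    (Λ : H →ₗ[ℤ] H →ₗ[ℤ] ℤ)
    (hsymm : ∀ x y, Λ x y = Λ y x)
    (hunimod : Function.Bijective fun x : H => Λ x)
    (L : Submodule ℤ H)
    (hsummand : ∃ L' : Submodule ℤ H, IsCompl L L')
    (hiso : ∀ x ∈ L, ∀ y ∈ L, Λ x y = 0)
    (hrank : 2 * Module.finrank ℤ L = Module.finrank ℤ H) :
    ∀ v : H, v ∈ L ↔ ∀ x ∈ L, Λ v x = 0 :=
  stmt9_general Λ hunimod L hsummand hiso hrank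
end

section
/- Let T be a compact oriented manifold with boundary M ⊔ S where the inclusion-induced maps and Poincaré–Lefschetz duality give the commutative ladder between the long exact sequence of the pair (T, M) and cohomology. If T is (n-1)-connected of dimension 2n+1, H_n(T) and H_{n+1}(T) are free, and S is a homotopy sphere, then dim_ℚ H_n(M; ℚ) = 2 · dim_ℚ ker(i_* : H_n(M; ℚ) → H_n(T; ℚ)), and ker i_* is an isotropic subspace for the intersection form on H_n(M; ℚ). -/
/-- Abstract form of the homological ladder for a bordism `T` between `M` and a
homotopy sphere: `V = H_n(M;ℚ)`, `W = H_n(T;ℚ)`, `U = H_{n+1}(T,M;ℚ)`,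
`i` induced by inclusion, `δ` the connecting map (exact at `V`), `Λ` the
`(-1)ⁿ`-symmetric nondegenerate intersection form on `H_n(M;ℚ)`, and
`φ : U ≃ H^n(T;ℚ) = (H_n(T;ℚ))*` the Poincaré–Lefschetz duality isomorphism,
compatible with `Λ` in the sense that the square of the ladder commutes:
`Λ(δu, v) = ⟨φu, i v⟩`.  Conclusion: half of `H_n(M)` lives, half dies, and
`ker i` is isotropic. -/
theorem stmt17 (n : ℕ)
    {V W U : Type*} [AddCommGroup V] [Module ℚ V] [FiniteDimensional ℚ V]
    [AddCommGroup W] [Module ℚ W] [FiniteDimensional ℚ W]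
    [AddCommGroup U] [Module ℚ U] [FiniteDimensional ℚ U]
    (i : V →ₗ[ℚ] W) (δ : U →ₗ[ℚ] V)
    (hexact : LinearMap.ker i = LinearMap.range δ)
    (Λ : V →ₗ[ℚ] V →ₗ[ℚ] ℚ)
    (hsymm : ∀ x y, Λ x y = (-1 : ℚ) ^ n * Λ y x)
    (hnondeg : Function.Bijective fun x : V => Λ x)
    (φ : U ≃ₗ[ℚ] Module.Dual ℚ W)
    (hcomm : ∀ (u : U) (v : V), Λ (δ u) v = φ u (i v)) :
    Module.finrank ℚ V = 2 * Module.finrank ℚ (LinearMap.ker i) ∧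
      ∀ x ∈ LinearMap.ker i, ∀ y ∈ LinearMap.ker i, Λ x y = 0 := by
  constructor
  · -- dimension count
    have hcomp : Λ ∘ₗ δ = i.dualMap ∘ₗ (φ : U →ₗ[ℚ] Module.Dual ℚ W) := by
      ext u v
      exact hcomm u v
    have hkerΛ : LinearMap.ker Λ = ⊥ := LinearMap.ker_eq_bot.mpr hnondeg.injective
    have hkerδ : LinearMap.ker δ = LinearMap.ker (Λ ∘ₗ δ) := by
      rw [LinearMap.ker_comp, hkerΛ, Submodule.comap_bot]
    have hkerδ2 : LinearMap.ker δ =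
        Submodule.comap (φ : U →ₗ[ℚ] Module.Dual ℚ W) (LinearMap.ker i.dualMap) := by
      rw [hkerδ, hcomp, LinearMap.ker_comp]
    have e : (LinearMap.ker δ : Submodule ℚ U) ≃ₗ[ℚ] (LinearMap.ker i.dualMap) := by
      rw [hkerδ2]
      exact φ.ofSubmodule' _
    have h1 : Module.finrank ℚ (LinearMap.ker δ) = Module.finrank ℚ (LinearMap.ker i.dualMap) :=
      e.finrank_eq
    have h2 : LinearMap.ker i.dualMap = (LinearMap.range i).dualAnnihilator :=
      i.ker_dualMap_eq_dualAnnihilator_range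
    have h3q := Submodule.finrank_quotient_add_finrank (LinearMap.range i)
    have h3e : Module.finrank ℚ (W ⧸ LinearMap.range i) =
        Module.finrank ℚ (LinearMap.range i).dualAnnihilator :=
      (Subspace.quotEquivAnnihilator (LinearMap.range i)).finrank_eq
    have h3 : Module.finrank ℚ (LinearMap.range i) +
        Module.finrank ℚ (LinearMap.range i).dualAnnihilator = Module.finrank ℚ W := by
      omega
    have h4 : Module.finrank ℚ (LinearMap.range δ) + Module.finrank ℚ (LinearMap.ker δ)
        = Module.finrank ℚ U := LinearMap.finrank_range_add_finrank_ker δ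
    have h5 : Module.finrank ℚ (LinearMap.range i) + Module.finrank ℚ (LinearMap.ker i)
        = Module.finrank ℚ V := LinearMap.finrank_range_add_finrank_ker i
    have h6 : Module.finrank ℚ U = Module.finrank ℚ W := by
      rw [φ.finrank_eq, Subspace.dual_finrank_eq]
    have h7 : Module.finrank ℚ (LinearMap.range δ) = Module.finrank ℚ (LinearMap.ker i) := by
      rw [hexact]
    rw [h2] at h1
    omega
  · intro x hx y hy
    rw [hexact] at hx
    obtain ⟨u, rfl⟩ := hx
    rw [hcomm u y, LinearMap.mem_ker.mp hy, map_zero]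
end
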